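/- Let ψ : ℝ^d → ℂ be a Schwartz function. For every μ > 0 there exists C > 0 such that for all integers j ≥ 0, all l ∈ ℤ^d with ‖l‖_∞ ≥ 2, all k ∈ ℤ^d with k/2^j ∈ 2l + [-1,1)^d, and all x ∈ [-2,2]^d, one has |ψ(2^j x − k)| ≤ C / (2^{jμ} (‖l‖_∞ + 1)^μ). -/

import Mathlib

/-- Schwartz decay estimate for `ψ(2^j x − k)` when `k ∈ Λ_{j,l}`,
`‖l‖_∞ ≥ 2`, and `x ∈ [-2,2]^d`. -/
theorem stmt0 (d : ℕ) (ψ : SchwartzMap (Fin d → ℝ) ℂ) (μ : ℝ) (hμ : 0 < μ) :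
    ∃ C > 0, ∀ (j : ℕ) (l : Fin d → ℤ), 2 ≤ ‖l‖ →
      ∀ k : Fin d → ℤ,
        (∀ i, (k i : ℝ) / 2 ^ j ∈ Set.Ico (2 * (l i : ℝ) - 1) (2 * (l i : ℝ) + 1)) →
      ∀ x : Fin d → ℝ, (∀ i, x i ∈ Set.Icc (-2 : ℝ) 2) →
      ‖ψ (fun i => 2 ^ j * x i - (k i : ℝ))‖ ≤
        C / ((2 : ℝ) ^ ((j : ℝ) * μ) * (‖l‖ + 1) ^ μ) := by
  obtain ⟨C, hC0, hC⟩ := ψ.decay ⌈μ⌉₊ 0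
  refine ⟨C * 3 ^ μ, by positivity, ?_⟩
  intro j l hl k hk x hx
  set u : Fin d → ℝ := fun i => 2 ^ j * x i - (k i : ℝ) with hu
  have hL3 : (3:ℝ) ≤ ‖l‖ + 1 := by linarith
  -- find coordinate realizing the sup norm
  have hd : Nonempty (Fin d) := by
    rcases isEmpty_or_nonempty (Fin d) with h | h
    · exfalso
      have : ‖l‖ = 0 := by
        simp [norm_eq_zero]
        exact Subsingleton.elim _ _
      linarith
    · exact h
  obtain ⟨i, -, hi⟩ := Finset.exists_mem_eq_sup (Finset.univ : Finset (Fin d))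
    Finset.univ_nonempty (fun i => ‖l i‖₊)
  have hnorm : ‖l‖ = |(l i : ℝ)| := by
    have : ‖l‖₊ = ‖l i‖₊ := by rw [Pi.nnnorm_def, hi]
    have h2 : ‖l‖ = ‖l i‖ := congrArg NNReal.toReal this
    rw [h2, Int.norm_eq_abs]
  have hli : (2:ℝ) ≤ |(l i : ℝ)| := hnorm ▸ hl
  have h2j : (1:ℝ) ≤ 2 ^ j := one_le_pow₀ (by norm_num)
  have h2j0 : (0:ℝ) < 2 ^ j := by positivity
  -- lower bound |u i|
  have hki := hk i
  obtain ⟨hk1, hk2⟩ := hki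
  have hxi := hx i
  have habs : 2 * |(l i : ℝ)| - 1 ≤ |(k i : ℝ) / 2 ^ j| := by
    rcases le_or_gt 0 (l i : ℝ) with h | h
    · rw [abs_of_nonneg h] at *
      have : (0:ℝ) ≤ (k i : ℝ) / 2 ^ j := by linarith
      rw [abs_of_nonneg this]; linarith
    · rw [abs_of_neg h] at *
      have : (k i : ℝ) / 2 ^ j < 0 := by linarith
      rw [abs_of_neg this]; linarith
  have hui : 2 ^ j * (‖l‖ + 1) / 3 ≤ |u i| := by
    have h0 : u i = 2 ^ j * (x i - (k i : ℝ) / 2 ^ j) := by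
      simp only [hu]
      field_simp
    have h1 : |u i| = 2 ^ j * |x i - (k i : ℝ) / 2 ^ j| := by
      rw [h0, abs_mul, abs_of_pos h2j0]
    have h2 : |(k i : ℝ) / 2 ^ j| - |x i| ≤ |x i - (k i : ℝ) / 2 ^ j| := by
      rw [abs_sub_comm]; exact abs_sub_abs_le_abs_sub _ _
    have hxabs : |x i| ≤ 2 := abs_le.2 ⟨hxi.1, hxi.2⟩
    have : 2 * ‖l‖ - 3 ≤ |x i - (k i : ℝ) / 2 ^ j| := by
      rw [hnorm]; linarith
    have hkey : (‖l‖ + 1) / 3 ≤ |x i - (k i : ℝ) / 2 ^ j| := by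
      have : (‖l‖ + 1) / 3 ≤ 2 * ‖l‖ - 3 := by linarith
      linarith
    rw [h1, mul_div_assoc]
    exact mul_le_mul_of_nonneg_left hkey (le_of_lt h2j0)
  set A : ℝ := 2 ^ j * (‖l‖ + 1) / 3 with hA
  have hA1 : (1:ℝ) ≤ A := by
    rw [hA]
    rw [le_div_iff₀ (by norm_num)]
    nlinarith
  have hAu : A ≤ ‖u‖ := by
    refine hui.trans ?_
    have := norm_le_pi_norm u i
    rwa [Real.norm_eq_abs] at this
  have hu1 : (1:ℝ) ≤ ‖u‖ := hA1.trans hAu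
  -- decay bound
  have hdecay : ‖ψ u‖ ≤ C / ‖u‖ ^ ⌈μ⌉₊ := by
    have := hC u
    rw [norm_iteratedFDeriv_zero] at this
    rw [le_div_iff₀ (by positivity)]
    linarith [this, mul_comm (‖u‖ ^ ⌈μ⌉₊) ‖ψ u‖]
  -- compare powers
  have hpow : A ^ μ ≤ ‖u‖ ^ ⌈μ⌉₊ := by
    calc A ^ μ ≤ ‖u‖ ^ μ := Real.rpow_le_rpow (by positivity) hAu (le_of_lt hμ)
    _ ≤ ‖u‖ ^ (⌈μ⌉₊ : ℝ) := Real.rpow_le_rpow_of_exponent_le hu1 (Nat.le_ceil μ)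
    _ = ‖u‖ ^ ⌈μ⌉₊ := Real.rpow_natCast _ _
  have hApos : (0:ℝ) < A ^ μ := Real.rpow_pos_of_pos (by positivity) μ
  have hmain : ‖ψ u‖ ≤ C / A ^ μ :=
    hdecay.trans (div_le_div_of_nonneg_left (le_of_lt hC0) hApos hpow)
  -- rewrite A ^ μ
  have hArw : A ^ μ = (2:ℝ) ^ ((j:ℝ) * μ) * (‖l‖ + 1) ^ μ / 3 ^ μ := by
    rw [hA, Real.div_rpow (by positivity) (by norm_num),
      Real.mul_rpow (by positivity) (by linarith)]
    congr 1
    congr 1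
    rw [← Real.rpow_natCast (2:ℝ) j, ← Real.rpow_mul (by norm_num)]
  rw [hArw] at hmain
  calc ‖ψ u‖ ≤ C / ((2:ℝ) ^ ((j:ℝ) * μ) * (‖l‖ + 1) ^ μ / 3 ^ μ) := hmain
  _ = C * 3 ^ μ / ((2:ℝ) ^ ((j:ℝ) * μ) * (‖l‖ + 1) ^ μ) := by
      rw [div_div_eq_mul_div]
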